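/- arXiv:1207.5466 — 2 statements merged into one kernel-verified Lean document; each statement's English description precedes it below -/
import Mathlib

section
/- Let G = (V,E) be a finite graph that is 3-colorable with colors {R,G,B}. Over the item set 𝓘 = {R_v, G_v, B_v : v ∈ V}, there exists a transaction database 𝓓 of size n (a multiset of n subsets of 𝓘, n ≥ 3) such that: for each vertex v, |support({R_v},𝓓) − n/3| ≤ 1, |support({G_v},𝓓) − n/3| ≤ 1, |support({B_v},𝓓) − n/3| ≤ 1, support({R_v,G_v},𝓓) = support({R_v,B_v},𝓓) = support({G_v,B_v},𝓓) = 0, and for each edge (u,v) ∈ E, support({R_u,R_v},𝓓) = support({G_u,G_v},𝓓) = support({B_u,B_v},𝓓) = 0. -/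
/-!
The cyclic shifts `c + i` of a proper colouring `c : V → Fin k` are again proper colourings, and
at each vertex `v` exactly one of them, namely `c + (a - c v)`, gives `v` the colour `a`. So in a
database made of the transactions `{(v, (c + i) v) : v ∈ V}`, with multiplicities splitting `n` as
evenly as possible, the item `(v, a)` is supported by the copies of a single shift, which number
`⌊n / k⌋` or `⌊n / k⌋ + 1`; and no transaction contains two colours of one vertex or one colour at
both ends of an edge.
-/

/-- The support of an itemset `I` in a transaction database `D` (a multiset of
subsets of the item set): the number of transactions containing `I`. -/
def support {ι : Type*} [DecidableEq ι] (I : Finset ι) (D : Multiset (Finset ι)) : ℕ :=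
  (D.filter (fun T => I ⊆ T)).card

section Support

variable {ι : Type*} [DecidableEq ι]

theorem support_eq_countP (I : Finset ι) (D : Multiset (Finset ι)) :
    support I D = D.countP (I ⊆ ·) :=
  (Multiset.countP_eq_card_filter _ _).symm

theorem support_sum {κ : Type*} (I : Finset ι) (s : Finset κ) (D : κ → Multiset (Finset ι)) :
    support I (∑ i ∈ s, D i) = ∑ i ∈ s, support I (D i) := by
  simp only [support_eq_countP, ← Multiset.coe_countPAddMonoidHom, map_sum]

theorem support_replicate (I : Finset ι) (m : ℕ) (T : Finset ι) :
    support I (Multiset.replicate m T) = if I ⊆ T then m else 0 := by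
  rw [support_eq_countP]
  split_ifs with h
  · rw [Multiset.countP_eq_card.2 fun _ hT => Multiset.eq_of_mem_replicate hT ▸ h,
      Multiset.card_replicate]
  · exact Multiset.countP_eq_zero.2 fun _ hT => Multiset.eq_of_mem_replicate hT ▸ h

end Support

section BalancedPart

def balancedPart (k n : ℕ) (j : Fin k) : ℕ := n / k + if (j : ℕ) < n % k then 1 else 0

theorem sum_balancedPart {k : ℕ} (hk : 0 < k) (n : ℕ) : ∑ j, balancedPart k n j = n := by
  simp only [balancedPart, Finset.sum_add_distrib, Finset.sum_const, Finset.card_univ,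
    Fintype.card_fin, smul_eq_mul, Finset.sum_boole, Fin.card_filter_val_lt, Nat.cast_id,
    min_eq_right (Nat.mod_lt n hk).le]
  exact Nat.div_add_mod n k

theorem abs_balancedPart_sub_le {k : ℕ} (n : ℕ) (j : Fin k) :
    |(balancedPart k n j : ℚ) - n / k| ≤ 1 := by
  have hk : (0 : ℚ) < k := by exact_mod_cast j.pos
  have hn : (n : ℚ) = k * (n / k : ℕ) + (n % k : ℕ) := by
    exact_mod_cast (Nat.div_add_mod n k).symm
  have hr : ((n % k : ℕ) : ℚ) / k < 1 := (div_lt_one hk).2 (by exact_mod_cast Nat.mod_lt n j.pos)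
  have hr₀ : 0 ≤ ((n % k : ℕ) : ℚ) / k := by positivity
  have hdiff : (balancedPart k n j : ℚ) - n / k =
      (if (j : ℕ) < n % k then 1 else 0) - ((n % k : ℕ) : ℚ) / k := by
    rw [hn, balancedPart]
    push_cast
    field_simp
    ring
  rw [hdiff, abs_le]
  split_ifs <;> constructor <;> linarith

end BalancedPart

section ShiftDatabase

variable {V α : Type*} [Fintype V] [DecidableEq V] [DecidableEq α]

def coloringTransaction (c : V → α) : Finset (V × α) :=
  Finset.univ.image fun v => (v, c v)

@[simp]
theorem mem_coloringTransaction {c : V → α} {v : V} {a : α} :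
    (v, a) ∈ coloringTransaction c ↔ c v = a := by
  simp [coloringTransaction]

theorem pair_subset_coloringTransaction_iff {c : V → α} {u v : V} {a b : α} :
    {(u, a), (v, b)} ⊆ coloringTransaction c ↔ c u = a ∧ c v = b := by
  simp [Finset.insert_subset_iff]

variable {k : ℕ}

def shiftDatabase (c : V → Fin k) (m : Fin k → ℕ) : Multiset (Finset (V × Fin k)) :=
  ∑ i, Multiset.replicate (m i) (coloringTransaction fun v => c v + i)

theorem card_shiftDatabase (c : V → Fin k) (m : Fin k → ℕ) :
    Multiset.card (shiftDatabase c m) = ∑ i, m i := by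
  simp [shiftDatabase]

theorem support_shiftDatabase (I : Finset (V × Fin k)) (c : V → Fin k) (m : Fin k → ℕ) :
    support I (shiftDatabase c m) =
      ∑ i, if I ⊆ coloringTransaction (fun v => c v + i) then m i else 0 := by
  simp only [shiftDatabase, support_sum, support_replicate]

theorem support_singleton_shiftDatabase [NeZero k] (c : V → Fin k) (m : Fin k → ℕ) (v : V)
    (a : Fin k) : support {(v, a)} (shiftDatabase c m) = m (a - c v) := by
  simp [support_shiftDatabase, ← eq_sub_iff_add_eq']

theorem support_shiftDatabase_eq_zero {I : Finset (V × Fin k)} (c : V → Fin k) (m : Fin k → ℕ)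
    (hI : ∀ i, ¬ I ⊆ coloringTransaction fun v => c v + i) :
    support I (shiftDatabase c m) = 0 := by
  simp [support_shiftDatabase, hI]

end ShiftDatabase

theorem three_colorable_gives_approx_database_general
    {V : Type*} [Fintype V] [DecidableEq V] (G : SimpleGraph V)
    (c : V → Fin 3) (hc : ∀ u v, G.Adj u v → c u ≠ c v)
    (n : ℕ) :
    ∃ D : Multiset (Finset (V × Fin 3)),
      Multiset.card D = n ∧
      (∀ v : V, ∀ col : Fin 3,
        |(support {(v, col)} D : ℚ) - (n : ℚ) / 3| ≤ 1) ∧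
      (∀ v : V, ∀ col col' : Fin 3, col ≠ col' →
        support {(v, col), (v, col')} D = 0) ∧
      (∀ u v : V, G.Adj u v → ∀ col : Fin 3,
        support {(u, col), (v, col)} D = 0) := by
  refine ⟨shiftDatabase c (balancedPart 3 n), ?_, ?_, ?_, ?_⟩
  · rw [card_shiftDatabase, sum_balancedPart three_pos]
  · intro v col
    rw [support_singleton_shiftDatabase]
    exact_mod_cast abs_balancedPart_sub_le n (col - c v)
  · intro v col col' hne
    refine support_shiftDatabase_eq_zero c _ fun i h => hne ?_
    rw [pair_subset_coloringTransaction_iff] at h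
    exact h.1.symm.trans h.2
  · intro u v huv col
    refine support_shiftDatabase_eq_zero c _ fun i h => hc u v huv ?_
    rw [pair_subset_coloringTransaction_iff] at h
    exact add_right_cancel (h.1.trans h.2.symm)

/-- If `G` is 3-colorable, then there is a transaction database of size `n ≥ 3`
over the item set `V × Fin 3` (items `R_v, G_v, B_v`) approximately satisfying
the vertex constraints (each single colour item supported within 1 of `n/3`,
each pair of colour items of a vertex has support 0) and the edge constraints
(same-colour items of adjacent vertices never co-occur). -/
theorem three_colorable_gives_approx_database
    {V : Type*} [Fintype V] [DecidableEq V] (G : SimpleGraph V)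
    (c : V → Fin 3) (hc : ∀ u v, G.Adj u v → c u ≠ c v)
    (n : ℕ) (hn : 3 ≤ n) :
    ∃ D : Multiset (Finset (V × Fin 3)),
      Multiset.card D = n ∧
      (∀ v : V, ∀ col : Fin 3,
        |(support {(v, col)} D : ℚ) - (n : ℚ) / 3| ≤ 1) ∧
      (∀ v : V, ∀ col col' : Fin 3, col ≠ col' →
        support {(v, col), (v, col')} D = 0) ∧
      (∀ u v : V, G.Adj u v → ∀ col : Fin 3,
        support {(u, col), (v, col)} D = 0) :=
  three_colorable_gives_approx_database_general G c hc n
end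

section
/- Let G = (V,E) be a finite graph, m = 6|V| + 3|E|, and n, k positive integers with n > k·m². Suppose 𝓓 is a multiset of n subsets of 𝓘 = {R_v,G_v,B_v : v ∈ V} such that: at most k·m transactions violate each of the following m constraints — for each v ∈ V, the supports of {R_v,G_v}, {R_v,B_v}, {G_v,B_v} are each ≤ k·m; for each v ∈ V, each item in {R_v, G_v, B_v} is contained in at least n/3 − k·m transactions; and for each edge (u,v) ∈ E, the supports of {R_u,R_v}, {G_u,G_v}, {B_u,B_v} are each ≤ k·m. Then G is 3-colorable. -/
lemma countP_irrel {α : Type*} (p : α → Prop) (i1 i2 : DecidablePred p) (s : Multiset α) :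
    @Multiset.countP α p i1 s = @Multiset.countP α p i2 s := by
  rw [Subsingleton.elim i1 i2]

open Multiset in
lemma countP_mono_pred {α : Type*} (s : Multiset α) (p q : α → Prop)
    [DecidablePred p] [DecidablePred q] (h : ∀ a, p a → q a) :
    s.countP p ≤ s.countP q := by
  induction s using Multiset.induction_on with
  | empty => simp
  | cons a s ih =>
    simp only [Multiset.countP_cons]
    by_cases hp : p a
    · simp only [hp, h a hp, if_true]; omega
    · by_cases hq : q a <;> simp [hp, hq] <;> omega

open Multiset in
lemma countP_or_le {α : Type*} (s : Multiset α) (p q : α → Prop)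
    [DecidablePred p] [DecidablePred q] [DecidablePred fun a => p a ∨ q a] :
    s.countP (fun a => p a ∨ q a) ≤ s.countP p + s.countP q := by
  induction s using Multiset.induction_on with
  | empty => simp
  | cons a s ih =>
    simp only [Multiset.countP_cons]
    by_cases hp : p a <;> by_cases hq : q a <;> simp [hp, hq] <;> omega

open Multiset Classical in
lemma countP_exists_le_cl {α β : Type*} (D : Multiset β) (s : Finset α) (P : α → β → Prop)
    [∀ a, DecidablePred (P a)] :
    D.countP (fun T => ∃ a ∈ s, P a T) ≤ ∑ a ∈ s, D.countP (P a) := by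
  classical
  induction s using Finset.induction_on with
  | empty => simp
  | @insert b t hb ih =>
    rw [Finset.sum_insert hb]
    calc D.countP (fun T => ∃ a ∈ insert b t, P a T)
        = D.countP (fun T => P b T ∨ ∃ a ∈ t, P a T) := by
          apply Multiset.countP_congr rfl
          intro T _; simp [Finset.mem_insert, or_and_right, exists_or]
      _ ≤ D.countP (P b) + D.countP (fun T => ∃ a ∈ t, P a T) := countP_or_le _ _ _
      _ ≤ _ := by exact Nat.add_le_add_left ih _

open Multiset in
lemma countP_exists_le {α β : Type*} (D : Multiset β) (s : Finset α) (P : α → β → Prop)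
    [∀ a, DecidablePred (P a)] [DecidablePred fun T => ∃ a ∈ s, P a T] :
    D.countP (fun T => ∃ a ∈ s, P a T) ≤ ∑ a ∈ s, D.countP (P a) :=
  (countP_irrel _ _ _ _).trans_le (countP_exists_le_cl D s P)

open Multiset in
lemma vertex_key {V : Type*} [DecidableEq V] (v : V) (E : Multiset (Finset (V × Fin 3))) :
    E.countP (fun T => (v, (0 : Fin 3)) ∈ T)
      + E.countP (fun T => (v, (1 : Fin 3)) ∈ T)
      + E.countP (fun T => (v, (2 : Fin 3)) ∈ T)
    ≤ E.countP (fun T => ∃ col : Fin 3, (v, col) ∈ T)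
      + (E.countP (fun T => (v, (0 : Fin 3)) ∈ T ∧ (v, (1 : Fin 3)) ∈ T)
        + E.countP (fun T => (v, (0 : Fin 3)) ∈ T ∧ (v, (2 : Fin 3)) ∈ T)
        + E.countP (fun T => (v, (1 : Fin 3)) ∈ T ∧ (v, (2 : Fin 3)) ∈ T)) := by
  induction E using Multiset.induction_on with
  | empty => simp
  | cons a s ih =>
    simp only [Multiset.countP_cons]
    have hex : (∃ col : Fin 3, (v, col) ∈ a) ↔
        ((v,(0:Fin 3)) ∈ a ∨ (v,(1:Fin 3)) ∈ a ∨ (v,(2:Fin 3)) ∈ a) := by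
      constructor
      · rintro ⟨c, hc⟩; fin_cases c <;> tauto
      · rintro (h|h|h) <;> exact ⟨_, h⟩
    by_cases h0 : (v,(0:Fin 3)) ∈ a <;> by_cases h1 : (v,(1:Fin 3)) ∈ a <;>
      by_cases h2 : (v,(2:Fin 3)) ∈ a <;>
      simp [hex, h0, h1, h2] <;> omega

/-- If there is a transaction database of size `n > k·m²` (where
`m = 6|V| + 3|E|`) over the item set `V × Fin 3` that approximately (within
`k·m`) satisfies the colouring support constraints, then `G` is 3-colorable. -/
theorem approx_database_gives_three_coloring
    {V : Type*} [Fintype V] [DecidableEq V]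
    (G : SimpleGraph V) [DecidableRel G.Adj]
    (m n k : ℕ)
    (hm : m = 6 * Fintype.card V + 3 * G.edgeFinset.card)
    (hk : 0 < k) (hn : k * m ^ 2 < n)
    (D : Multiset (Finset (V × Fin 3))) (hD : Multiset.card D = n)
    (hpair : ∀ v : V, ∀ col col' : Fin 3, col ≠ col' →
      support {(v, col), (v, col')} D ≤ k * m)
    (hsingle : ∀ v : V, ∀ col : Fin 3,
      (n : ℚ) / 3 - (k : ℚ) * m ≤ (support {(v, col)} D : ℚ))
    (hedge : ∀ u v : V, G.Adj u v → ∀ col : Fin 3,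
      support {(u, col), (v, col)} D ≤ k * m) :
    ∃ c : V → Fin 3, ∀ u v : V, G.Adj u v → c u ≠ c v := by
  classical
  have hsupp1 : ∀ a : V × Fin 3, support {a} D = D.countP (fun T => a ∈ T) := by
    intro a
    rw [support, ← Multiset.countP_eq_card_filter]
    exact Multiset.countP_congr rfl (by intro T _; simp)
  have hsupp2 : ∀ a b : V × Fin 3,
      support {a, b} D = D.countP (fun T => a ∈ T ∧ b ∈ T) := by
    intro a b
    rw [support, ← Multiset.countP_eq_card_filter]
    exact Multiset.countP_congr rfl (by intro T _; simp [Finset.insert_subset_iff])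
  -- per-vertex bound on transactions missing all three colours of v
  have hvert : ∀ v : V,
      D.countP (fun T => ∀ col : Fin 3, (v, col) ∉ T) ≤ 6 * (k * m) := by
    intro v
    have hkey := vertex_key v D
    have hcov : D.countP (fun T => ∀ col : Fin 3, (v, col) ∉ T)
        + D.countP (fun T => ∃ col : Fin 3, (v, col) ∈ T) = n := by
      rw [← hD, Multiset.card_eq_countP_add_countP (fun T => ∀ col : Fin 3, (v, col) ∉ T) D]
      congr 1
      apply Multiset.countP_congr rfl
      intro T _
      push_neg
      rfl
    have hs0 := hsingle v 0
    have hs1 := hsingle v 1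
    have hs2 := hsingle v 2
    have hp01 := hpair v 0 1 (by decide)
    have hp02 := hpair v 0 2 (by decide)
    have hp12 := hpair v 1 2 (by decide)
    rw [hsupp1] at hs0 hs1 hs2
    rw [hsupp2] at hp01 hp02 hp12
    have hkeyQ : ((D.countP (fun T => (v, (0:Fin 3)) ∈ T) : ℚ)
        + D.countP (fun T => (v, (1:Fin 3)) ∈ T)
        + D.countP (fun T => (v, (2:Fin 3)) ∈ T))
        ≤ (D.countP (fun T => ∃ col : Fin 3, (v, col) ∈ T) : ℚ)
        + ((D.countP (fun T => (v, (0:Fin 3)) ∈ T ∧ (v, (1:Fin 3)) ∈ T) : ℚ)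
          + D.countP (fun T => (v, (0:Fin 3)) ∈ T ∧ (v, (2:Fin 3)) ∈ T)
          + D.countP (fun T => (v, (1:Fin 3)) ∈ T ∧ (v, (2:Fin 3)) ∈ T)) := by
      exact_mod_cast hkey
    have hcovQ : (D.countP (fun T => ∀ col : Fin 3, (v, col) ∉ T) : ℚ)
        + (D.countP (fun T => ∃ col : Fin 3, (v, col) ∈ T) : ℚ) = n := by
      exact_mod_cast hcov
    have hp01Q : (D.countP (fun T => (v, (0:Fin 3)) ∈ T ∧ (v, (1:Fin 3)) ∈ T) : ℚ) ≤ k * m :=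
      by exact_mod_cast hp01
    have hp02Q : (D.countP (fun T => (v, (0:Fin 3)) ∈ T ∧ (v, (2:Fin 3)) ∈ T) : ℚ) ≤ k * m :=
      by exact_mod_cast hp02
    have hp12Q : (D.countP (fun T => (v, (1:Fin 3)) ∈ T ∧ (v, (2:Fin 3)) ∈ T) : ℚ) ≤ k * m :=
      by exact_mod_cast hp12
    have : (D.countP (fun T => ∀ col : Fin 3, (v, col) ∉ T) : ℚ) ≤ 6 * (k * m) := by
      linarith
    exact_mod_cast this
  -- per-edge bound
  have hedgeb : ∀ e ∈ G.edgeFinset, ∀ col : Fin 3,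
      D.countP (fun T => ∀ x ∈ e, (x, col) ∈ T) ≤ k * m := by
    intro e he
    induction e using Sym2.ind with
    | _ u v =>
      intro col
      rw [SimpleGraph.mem_edgeFinset, SimpleGraph.mem_edgeSet] at he
      calc D.countP (fun T => ∀ x ∈ (s(u,v) : Sym2 V), (x, col) ∈ T)
          ≤ D.countP (fun T => (u, col) ∈ T ∧ (v, col) ∈ T) := by
            apply countP_mono_pred
            intro T hT
            exact ⟨hT u (Sym2.mem_mk_left u v), hT v (Sym2.mem_mk_right u v)⟩
        _ = support {(u,col),(v,col)} D := (hsupp2 _ _).symm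
        _ ≤ k * m := hedge u v he col
  -- total bad count
  have hbadcount : D.countP (fun T =>
      (∃ v ∈ (Finset.univ : Finset V), ∀ col : Fin 3, (v, col) ∉ T) ∨
      (∃ e ∈ G.edgeFinset, ∃ col : Fin 3, ∀ x ∈ e, (x, col) ∈ T)) ≤ k * m ^ 2 := by
    calc D.countP (fun T =>
        (∃ v ∈ (Finset.univ : Finset V), ∀ col : Fin 3, (v, col) ∉ T) ∨
        (∃ e ∈ G.edgeFinset, ∃ col : Fin 3, ∀ x ∈ e, (x, col) ∈ T))
        ≤ D.countP (fun T => ∃ v ∈ (Finset.univ : Finset V), ∀ col : Fin 3, (v, col) ∉ T)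
          + D.countP (fun T => ∃ e ∈ G.edgeFinset, ∃ col : Fin 3, ∀ x ∈ e, (x, col) ∈ T) :=
          countP_or_le _ _ _
      _ ≤ (∑ v : V, D.countP (fun T => ∀ col : Fin 3, (v, col) ∉ T))
          + ∑ e ∈ G.edgeFinset, D.countP (fun T => ∃ col : Fin 3, ∀ x ∈ e, (x, col) ∈ T) :=
          add_le_add (countP_exists_le D Finset.univ _) (countP_exists_le D G.edgeFinset _)
      _ ≤ (∑ _v : V, 6 * (k * m)) + ∑ _e ∈ G.edgeFinset, 3 * (k * m) := by
          apply add_le_add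
          · exact Finset.sum_le_sum fun v _ => hvert v
          · apply Finset.sum_le_sum
            intro e he
            calc D.countP (fun T => ∃ col : Fin 3, ∀ x ∈ e, (x, col) ∈ T)
                ≤ ∑ col ∈ (Finset.univ : Finset (Fin 3)),
                    D.countP (fun T => ∀ x ∈ e, (x, col) ∈ T) := by
                  have h := countP_exists_le D (Finset.univ : Finset (Fin 3))
                    (fun col T => ∀ x ∈ e, (x, col) ∈ T)
                  refine le_trans (le_of_eq ?_) h
                  apply Multiset.countP_congr rfl
                  intro T _; simp
              _ ≤ ∑ _col ∈ (Finset.univ : Finset (Fin 3)), k * m :=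
                  Finset.sum_le_sum fun col _ => hedgeb e he col
              _ = 3 * (k * m) := by
                  rw [Finset.sum_const, Finset.card_univ]
                  simp [mul_assoc]
      _ = Fintype.card V * (6 * (k * m)) + G.edgeFinset.card * (3 * (k * m)) := by
          rw [Finset.sum_const, Finset.sum_const, Finset.card_univ, smul_eq_mul, smul_eq_mul]
      _ = k * m ^ 2 := by rw [hm]; ring
  -- extract a good transaction
  have hgood : ∃ T ∈ D, ¬ ((∃ v ∈ (Finset.univ : Finset V), ∀ col : Fin 3, (v, col) ∉ T) ∨
      (∃ e ∈ G.edgeFinset, ∃ col : Fin 3, ∀ x ∈ e, (x, col) ∈ T)) := by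
    have hsplit := Multiset.card_eq_countP_add_countP (fun T =>
      (∃ v ∈ (Finset.univ : Finset V), ∀ col : Fin 3, (v, col) ∉ T) ∨
      (∃ e ∈ G.edgeFinset, ∃ col : Fin 3, ∀ x ∈ e, (x, col) ∈ T)) D
    have hpos : 0 < D.countP (fun T =>
        ¬ ((∃ v ∈ (Finset.univ : Finset V), ∀ col : Fin 3, (v, col) ∉ T) ∨
        (∃ e ∈ G.edgeFinset, ∃ col : Fin 3, ∀ x ∈ e, (x, col) ∈ T))) := by
      omega
    rw [Multiset.countP_eq_card_filter] at hpos
    obtain ⟨T, hT⟩ := Multiset.card_pos_iff_exists_mem.mp hpos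
    rw [Multiset.mem_filter] at hT
    exact ⟨T, hT.1, hT.2⟩
  obtain ⟨T, hTD, hTgood⟩ := hgood
  rw [not_or] at hTgood
  obtain ⟨hcover, hmono⟩ := hTgood
  push_neg at hcover hmono
  choose c hc using fun v => hcover v (Finset.mem_univ v)
  refine ⟨c, fun u v huv hcuv => ?_⟩
  have he : s(u,v) ∈ G.edgeFinset := by
    rw [SimpleGraph.mem_edgeFinset, SimpleGraph.mem_edgeSet]; exact huv
  obtain ⟨x, hx, hxT⟩ := hmono _ he (c u)
  rw [Sym2.mem_iff] at hx
  rcases hx with h | h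
  · exact hxT (by rw [h]; exact hc u)
  · exact hxT (by rw [h, hcuv]; exact hc v)
end
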